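/- Let f, g : [a,b] → ℝ be continuous with f(x) ≤ g(x) for all x ∈ [a,b]. Then Tf(x) ≤ Tg(x) for all x ∈ [a,b], where T is the operator assigning to a continuous function the derivative of the convex envelope of its primitive. -/

import Mathlib

/-!
Let `F`, `G` be the primitives of `f ≤ g`. By compactness every value `F** x` is attained by a
two-point convex combination of values of `F`, so every supporting line of `F**` at `x` touches
the graph of `F` at points `s ≤ x ≤ t`. At an interior point `x` this makes `F**` differentiable,
with derivative the slope of any supporting line: either `x` is itself a contact point and `F**`
is squeezed between the line and `F`, or `F**` coincides with the line on `[s, t]`.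

Let `p`, `q` be the slopes of `F**`, `G**` at `x`, with `s` a contact point of `F` left of `x` and
`t` one of `G` right of `x`. If `s < t`, then `p (t - s) ≤ F t - F s ≤ G t - G s ≤ q (t - s)`
because `G - F` is nondecreasing; otherwise `x` is a contact point of both and
`p = F' x ≤ G' x = q`. The inequality reaches the endpoints because it makes `G** - F**`
monotone on `[a, b]`.
-/

open Set MeasureTheory Filter Topology

/-- The convex envelope (convexification) of `f` on `[a,b]`. -/
noncomputable def convEnv (a b : ℝ) (f : ℝ → ℝ) : ℝ → ℝ := fun x =>
  sInf {y : ℝ | ∃ lam x₀ x₁ : ℝ, lam ∈ Set.Icc (0:ℝ) 1 ∧ x₀ ∈ Set.Icc a b ∧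
    x₁ ∈ Set.Icc a b ∧ (1 - lam) * x₀ + lam * x₁ = x ∧
    y = (1 - lam) * f x₀ + lam * f x₁}

/-- The primitive `F(x) = ∫_a^x f(y) dy`. -/
noncomputable def primit (a : ℝ) (f : ℝ → ℝ) : ℝ → ℝ := fun x => ∫ y in a..x, f y

/-- The operator `T`: `Tf = (F**)'`, the derivative of the convex envelope of the
primitive `F` of `f`. -/
noncomputable def Tcv (a b : ℝ) (f : ℝ → ℝ) : ℝ → ℝ :=
  derivWithin (convEnv a b (primit a f)) (Set.Icc a b)

open scoped NNReal

theorem HasDerivAt.eq_of_eventuallyLE {φ χ : ℝ → ℝ} {x p q : ℝ} (hφ : HasDerivAt φ p x)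
    (hχ : HasDerivAt χ q x) (hle : φ ≤ᶠ[𝓝 x] χ) (heq : φ x = χ x) : p = q := by
  have hmin : IsLocalMin (χ - φ) x := by
    filter_upwards [hle] with u hu
    simp only [Pi.sub_apply, heq, sub_self, sub_nonneg]
    exact hu
  linarith [hmin.hasDerivAt_eq_zero (hχ.sub hφ)]

theorem hasDerivAt_of_squeeze {φ ψ χ : ℝ → ℝ} {x p q : ℝ} (hφ : HasDerivAt φ p x)
    (hχ : HasDerivAt χ q x) (hφψ : φ ≤ᶠ[𝓝 x] ψ) (hψχ : ψ ≤ᶠ[𝓝 x] χ) (hφx : φ x = ψ x)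
    (hχx : ψ x = χ x) : HasDerivAt ψ p x := by
  have hpq := hφ.eq_of_eventuallyLE hχ (hφψ.trans hψχ) (hφx.trans hχx)
  have hgap := hasDerivAt_iff_isLittleO.1 (hχ.sub hφ)
  have : HasDerivAt (ψ - φ) 0 x := by
    refine hasDerivAt_iff_isLittleO.2 ((Asymptotics.IsBigO.of_bound' ?_).trans_isLittleO hgap)
    filter_upwards [hφψ, hψχ] with u hu₁ hu₂
    simp only [Pi.sub_apply, hφx, hχx, ← hpq, sub_self, smul_eq_mul, mul_zero, sub_zero,
      Real.norm_eq_abs]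
    rw [abs_of_nonneg (sub_nonneg.2 hu₁), abs_of_nonneg (by linarith)]
    linarith
  simpa using hφ.add this

theorem hasDerivAt_const_add_mul_sub (c p x : ℝ) : HasDerivAt (fun u => c + p * (u - x)) p x := by
  simpa using (((hasDerivAt_id x).sub_const x).const_mul p).const_add c

theorem ConvexOn.differentiableWithinAt_Icc_left {a b p : ℝ} {E : ℝ → ℝ}
    (hE : ConvexOn ℝ (Icc a b) E) (hab : a < b)
    (hp : ∀ u ∈ Icc a b, E a + p * (u - a) ≤ E u) : DifferentiableWithinAt ℝ E (Icc a b) a := by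
  have hmono : MonotoneOn (slope E a) (Ioo a b) :=
    (hE.monotoneOn_slope_gt (left_mem_Icc.2 hab.le)).mono
      fun u hu => ⟨Ioo_subset_Icc_self hu, hu.1⟩
  have hbdd : BddBelow (slope E a '' Ioo a b) := by
    refine ⟨p, ?_⟩
    rintro _ ⟨u, hu, rfl⟩
    rw [slope_def_field, le_div_iff₀ (sub_pos.2 hu.1)]
    linarith [hp u (Ioo_subset_Icc_self hu)]
  refine HasDerivWithinAt.differentiableWithinAt (f' := sInf (slope E a '' Ioo a b)) ?_
  rw [hasDerivWithinAt_iff_tendsto_slope, Icc_sdiff_left, nhdsWithin_Ioc_eq_nhdsGT hab]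
  exact hmono.tendsto_nhdsWithin_Ioo_right (nonempty_Ioo.2 hab) hbdd

theorem ConvexOn.differentiableWithinAt_Icc_right {a b p : ℝ} {E : ℝ → ℝ}
    (hE : ConvexOn ℝ (Icc a b) E) (hab : a < b)
    (hp : ∀ u ∈ Icc a b, E b + p * (u - b) ≤ E u) : DifferentiableWithinAt ℝ E (Icc a b) b := by
  have hmono : MonotoneOn (slope E b) (Ioo a b) :=
    (hE.monotoneOn_slope_lt (right_mem_Icc.2 hab.le)).mono
      fun u hu => ⟨Ioo_subset_Icc_self hu, hu.2⟩
  have hbdd : BddAbove (slope E b '' Ioo a b) := by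
    refine ⟨p, ?_⟩
    rintro _ ⟨u, hu, rfl⟩
    rw [slope_def_field, div_le_iff_of_neg (sub_neg.2 hu.2)]
    linarith [hp u (Ioo_subset_Icc_self hu)]
  refine HasDerivWithinAt.differentiableWithinAt (f' := sSup (slope E b '' Ioo a b)) ?_
  rw [hasDerivWithinAt_iff_tendsto_slope, Icc_sdiff_right, nhdsWithin_Ico_eq_nhdsLT hab]
  exact hmono.tendsto_nhdsWithin_Ioo_left (nonempty_Ioo.2 hab) hbdd

theorem derivWithin_Icc_le_of_forall_mem_Ioo {a b : ℝ} {φ ψ : ℝ → ℝ}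
    (hφ : DifferentiableOn ℝ φ (Icc a b)) (hψ : DifferentiableOn ℝ ψ (Icc a b))
    (hle : ∀ x ∈ Ioo a b, derivWithin φ (Icc a b) x ≤ derivWithin ψ (Icc a b) x)
    {x : ℝ} (hx : x ∈ Icc a b) :
    derivWithin φ (Icc a b) x ≤ derivWithin ψ (Icc a b) x := by
  have hmono : MonotoneOn (ψ - φ) (Icc a b) := by
    refine monotoneOn_of_hasDerivWithinAt_nonneg (convex_Icc a b) (hψ.continuousOn.sub
      hφ.continuousOn) (fun u hu => ?_) (fun u hu => sub_nonneg.2 (hle u (by simpa using hu)))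
    exact ((hψ u (interior_subset hu)).hasDerivWithinAt.sub
      (hφ u (interior_subset hu)).hasDerivWithinAt).mono interior_subset
  have := hmono.derivWithin_nonneg (x := x)
  rwa [derivWithin_sub (hψ x hx) (hφ x hx), sub_nonneg] at this

section ConvexEnvelope

variable {a b : ℝ} {F G : ℝ → ℝ} {K : ℝ≥0}

theorem convEnv_le_combination (hF : BddBelow (F '' Icc a b)) {lam x₀ x₁ : ℝ}
    (hlam : lam ∈ Icc (0 : ℝ) 1) (h₀ : x₀ ∈ Icc a b) (h₁ : x₁ ∈ Icc a b) :
    convEnv a b F ((1 - lam) * x₀ + lam * x₁) ≤ (1 - lam) * F x₀ + lam * F x₁ := by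
  refine csInf_le ?_ ⟨lam, x₀, x₁, hlam, h₀, h₁, rfl, rfl⟩
  obtain ⟨m, hm⟩ := hF
  refine ⟨m, ?_⟩
  rintro _ ⟨l, y₀, y₁, hl, hy₀, hy₁, -, rfl⟩
  have e₀ := mul_le_mul_of_nonneg_left (hm (mem_image_of_mem F hy₀)) (sub_nonneg.2 hl.2)
  have e₁ := mul_le_mul_of_nonneg_left (hm (mem_image_of_mem F hy₁)) hl.1
  linear_combination e₀ + e₁

theorem le_convEnv {c x : ℝ} (hx : x ∈ Icc a b)
    (h : ∀ lam ∈ Icc (0 : ℝ) 1, ∀ x₀ ∈ Icc a b, ∀ x₁ ∈ Icc a b,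
      (1 - lam) * x₀ + lam * x₁ = x → c ≤ (1 - lam) * F x₀ + lam * F x₁) :
    c ≤ convEnv a b F x :=
  le_csInf ⟨F x, 0, x, x, left_mem_Icc.2 zero_le_one, hx, hx, by ring, by ring⟩
    fun _ ⟨lam, x₀, x₁, hlam, h₀, h₁, hcomb, hy⟩ => hy ▸ h lam hlam x₀ h₀ x₁ h₁ hcomb

theorem convEnv_le_self (hF : BddBelow (F '' Icc a b)) {x : ℝ} (hx : x ∈ Icc a b) :
    convEnv a b F x ≤ F x := by
  simpa using convEnv_le_combination hF (left_mem_Icc.2 zero_le_one) hx hx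

theorem convEnv_le_chord (hF : BddBelow (F '' Icc a b)) {u v x : ℝ} (hu : u ∈ Icc a b)
    (hv : v ∈ Icc a b) (hux : u ≤ x) (hxv : x ≤ v) (huv : u < v) :
    (v - u) * convEnv a b F x ≤ (v - x) * F u + (x - u) * F v := by
  have hvu : 0 < v - u := sub_pos.2 huv
  have hlam : (x - u) / (v - u) ∈ Icc (0 : ℝ) 1 :=
    ⟨div_nonneg (sub_nonneg.2 hux) hvu.le, (div_le_one hvu).2 (by linarith)⟩
  have h := convEnv_le_combination hF hlam hu hv
  rw [show (1 - (x - u) / (v - u)) * u + (x - u) / (v - u) * v = x by field_simp; ring] at h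
  calc (v - u) * convEnv a b F x
      ≤ (v - u) * ((1 - (x - u) / (v - u)) * F u + (x - u) / (v - u) * F v) := by gcongr
    _ = (v - x) * F u + (x - u) * F v := by field_simp; ring

theorem affine_le_convEnv {x y p u : ℝ} (h : ∀ v ∈ Icc a b, y + p * (v - x) ≤ F v)
    (hu : u ∈ Icc a b) : y + p * (u - x) ≤ convEnv a b F u :=
  le_convEnv hu fun lam hlam x₀ h₀ x₁ h₁ hcomb => by
    have e₀ := mul_le_mul_of_nonneg_left (h x₀ h₀) (sub_nonneg.2 hlam.2)
    have e₁ := mul_le_mul_of_nonneg_left (h x₁ h₁) hlam.1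
    rw [← hcomb]
    linear_combination e₀ + e₁

theorem exists_support_convEnv (hF : LipschitzOnWith K F (Icc a b)) {x : ℝ}
    (hx : x ∈ Icc a b) : ∃ p, ∀ u ∈ Icc a b, convEnv a b F x + p * (u - x) ≤ F u := by
  have hFb := isCompact_Icc.bddBelow_image hF.continuousOn
  have hEx := convEnv_le_self hFb hx
  have hK : ∀ u ∈ Icc a b, ∀ v ∈ Icc a b, u ≤ v → |F v - F u| ≤ K * (v - u) :=
    fun u hu v hv huv => by
      simpa [Real.dist_eq, abs_of_nonneg (sub_nonneg.2 huv)] using hF.dist_le_mul v hv u hu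
  -- `p` is the largest left slope `(F** x - F u) / (x - u)`; each lies below every right slope by
  -- `convEnv_le_chord`. The slope `-K` keeps the set nonempty at `x = a`.
  set E := convEnv a b F x
  set A := insert (-(K : ℝ)) ((fun u => (E - F u) / (x - u)) '' Ico a x)
  have hA : BddAbove A := by
    refine ⟨K, forall_mem_insert.2 ⟨by simp, ?_⟩⟩
    rintro _ ⟨u, hu, rfl⟩
    have := (abs_le.1 (hK u ⟨hu.1, hu.2.le.trans hx.2⟩ x hx hu.2.le)).2
    rw [div_le_iff₀ (sub_pos.2 hu.2)]
    linarith
  refine ⟨sSup A, fun v hv => ?_⟩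
  rcases lt_trichotomy v x with hvx | rfl | hxv
  · have := le_csSup hA (mem_insert_of_mem _ ⟨v, ⟨hv.1, hvx⟩, rfl⟩)
    rw [div_le_iff₀ (sub_pos.2 hvx)] at this
    linarith
  · simpa using hEx
  · have : sSup A ≤ (F v - E) / (v - x) := by
      refine csSup_le (insert_nonempty _ _) (forall_mem_insert.2 ⟨?_, ?_⟩)
      · have := (abs_le.1 (hK x hx v hv hxv.le)).1
        rw [le_div_iff₀ (sub_pos.2 hxv)]
        linarith
      · rintro _ ⟨u, hu, rfl⟩
        have := convEnv_le_chord hFb ⟨hu.1, hu.2.le.trans hx.2⟩ hv hu.2.le hxv.le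
          (hu.2.trans hxv)
        rw [div_le_div_iff₀ (sub_pos.2 hu.2) (sub_pos.2 hxv)]
        linarith
    rw [le_div_iff₀ (sub_pos.2 hxv)] at this
    linarith

theorem convexOn_convEnv (hF : LipschitzOnWith K F (Icc a b)) :
    ConvexOn ℝ (Icc a b) (convEnv a b F) := by
  refine ⟨convex_Icc a b, fun u hu v hv α β hα hβ hαβ => ?_⟩
  obtain ⟨p, hp⟩ := exists_support_convEnv hF (convex_Icc a b hu hv hα hβ hαβ)
  have eu := mul_le_mul_of_nonneg_left (affine_le_convEnv hp hu) hα
  have ev := mul_le_mul_of_nonneg_left (affine_le_convEnv hp hv) hβ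
  simp only [smul_eq_mul] at eu ev ⊢
  linear_combination eu + ev - (convEnv a b F (α * u + β * v) - p * (α * u + β * v)) * hαβ

theorem exists_convEnv_eq_combination (hF : ContinuousOn F (Icc a b)) {x : ℝ}
    (hx : x ∈ Icc a b) :
    ∃ lam ∈ Icc (0 : ℝ) 1, ∃ x₀ ∈ Icc a b, ∃ x₁ ∈ Icc a b,
      (1 - lam) * x₀ + lam * x₁ = x ∧ convEnv a b F x = (1 - lam) * F x₀ + lam * F x₁ := by
  set S := (Icc (0 : ℝ) 1 ×ˢ Icc a b ×ˢ Icc a b) ∩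
    {q : ℝ × ℝ × ℝ | (1 - q.1) * q.2.1 + q.1 * q.2.2 = x}
  have hS : IsCompact S := (isCompact_Icc.prod (isCompact_Icc.prod isCompact_Icc)).inter_right
    (isClosed_eq (by fun_prop) continuous_const)
  have hSne : S.Nonempty := ⟨(0, x, x), ⟨left_mem_Icc.2 zero_le_one, hx, hx⟩, by simp⟩
  have hΦ : ContinuousOn (fun q : ℝ × ℝ × ℝ => (1 - q.1) * F q.2.1 + q.1 * F q.2.2) S :=
    ((continuous_const.sub continuous_fst).continuousOn.mul
        (hF.comp (by fun_prop) fun q hq => hq.1.2.1)).add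
      (continuous_fst.continuousOn.mul (hF.comp (by fun_prop) fun q hq => hq.1.2.2))
  obtain ⟨⟨lam, x₀, x₁⟩, ⟨⟨hlam, h₀, h₁⟩, hcomb⟩, hmin⟩ := hS.exists_isMinOn hSne hΦ
  refine ⟨lam, hlam, x₀, h₀, x₁, h₁, hcomb, le_antisymm ?_ ?_⟩
  · exact hcomb ▸ convEnv_le_combination (isCompact_Icc.bddBelow_image hF) hlam h₀ h₁
  · exact le_convEnv hx fun l hl y₀ hy₀ y₁ hy₁ hy =>
      isMinOn_iff.1 hmin (l, y₀, y₁) ⟨⟨hl, hy₀, hy₁⟩, hy⟩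

theorem exists_contact_of_support (hF : ContinuousOn F (Icc a b)) {x p : ℝ}
    (hx : x ∈ Icc a b) (hp : ∀ u ∈ Icc a b, convEnv a b F x + p * (u - x) ≤ F u) :
    ∃ s ∈ Icc a b, ∃ t ∈ Icc a b, s ≤ x ∧ x ≤ t ∧
      F s = convEnv a b F x + p * (s - x) ∧ F t = convEnv a b F x + p * (t - x) := by
  obtain ⟨lam, hlam, x₀, h₀, x₁, h₁, hcomb, hE⟩ := exists_convEnv_eq_combination hF hx
  have e₀ := mul_le_mul_of_nonneg_left (hp x₀ h₀) (sub_nonneg.2 hlam.2)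
  have e₁ := mul_le_mul_of_nonneg_left (hp x₁ h₁) hlam.1
  -- the gaps between `F` and the supporting line at `x₀`, `x₁` are `≥ 0` with zero weighted mean
  have hsum : (1 - lam) * (F x₀ - (convEnv a b F x + p * (x₀ - x))) +
      lam * (F x₁ - (convEnv a b F x + p * (x₁ - x))) = 0 := by
    linear_combination -hE - p * hcomb
  have touch₀ : lam < 1 → F x₀ = convEnv a b F x + p * (x₀ - x) := fun h => by
    have := (mul_eq_zero.1 (show (1 - lam) * (F x₀ - (convEnv a b F x + p * (x₀ - x))) = 0 by
      linarith)).resolve_left (by linarith)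
    linarith
  have touch₁ : 0 < lam → F x₁ = convEnv a b F x + p * (x₁ - x) := fun h => by
    have := (mul_eq_zero.1 (show lam * (F x₁ - (convEnv a b F x + p * (x₁ - x))) = 0 by
      linarith)).resolve_left h.ne'
    linarith
  rcases hlam.1.eq_or_lt with rfl | hl₀
  · obtain rfl : x₀ = x := by linarith
    exact ⟨x₀, h₀, x₀, h₀, le_rfl, le_rfl, touch₀ one_pos, touch₀ one_pos⟩
  rcases hlam.2.eq_or_lt with rfl | hl₁
  · obtain rfl : x₁ = x := by linarith
    exact ⟨x₁, h₁, x₁, h₁, le_rfl, le_rfl, touch₁ one_pos, touch₁ one_pos⟩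
  rcases le_total x₀ x₁ with h | h
  · exact ⟨x₀, h₀, x₁, h₁, by nlinarith, by nlinarith, touch₀ hl₁, touch₁ hl₀⟩
  · exact ⟨x₁, h₁, x₀, h₀, by nlinarith, by nlinarith, touch₁ hl₀, touch₀ hl₁⟩

theorem hasDerivAt_convEnv_of_support (hF : ContinuousOn F (Icc a b)) {x p : ℝ}
    (hx : x ∈ Ioo a b) (hFx : DifferentiableAt ℝ F x)
    (hp : ∀ u ∈ Icc a b, convEnv a b F x + p * (u - x) ≤ F u) :
    HasDerivAt (convEnv a b F) p x := by
  have hxI := Ioo_subset_Icc_self hx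
  have hFb := isCompact_Icc.bddBelow_image hF
  have hI : Icc a b ∈ 𝓝 x := Icc_mem_nhds hx.1 hx.2
  set E := convEnv a b F
  have hline := hasDerivAt_const_add_mul_sub (E x) p x
  have hbelow : (fun u => E x + p * (u - x)) ≤ᶠ[𝓝 x] E :=
    eventually_of_mem hI fun u hu => affine_le_convEnv hp hu
  by_cases hcontact : E x = F x
  · exact hasDerivAt_of_squeeze hline hFx.hasDerivAt hbelow
      (eventually_of_mem hI fun u hu => convEnv_le_self hFb hu) (by simp) hcontact
  -- otherwise `F**` is affine on the segment joining the two contact points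
  obtain ⟨s, hs, t, ht, hsx, hxt, hFs, hFt⟩ := exists_contact_of_support hF hxI hp
  have hsx : s < x := hsx.lt_of_ne (by rintro rfl; exact hcontact (by simpa using hFs.symm))
  have hxt : x < t := hxt.lt_of_ne (by rintro rfl; exact hcontact (by simpa using hFt.symm))
  have habove : E ≤ᶠ[𝓝 x] fun u => E x + p * (u - x) := by
    refine eventually_of_mem (Icc_mem_nhds hsx hxt) fun u hu => ?_
    have h := convEnv_le_chord hFb hs ht hu.1 hu.2 (hsx.trans hxt)
    rw [hFs, hFt] at h
    exact le_of_mul_le_mul_left (h.trans_eq (by ring)) (sub_pos.2 (hsx.trans hxt))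
  exact hasDerivAt_of_squeeze hline hline hbelow habove (by simp) (by simp)

theorem differentiableOn_convEnv (hab : a < b) (hF : LipschitzOnWith K F (Icc a b))
    (hF' : ∀ x ∈ Ioo a b, DifferentiableAt ℝ F x) :
    DifferentiableOn ℝ (convEnv a b F) (Icc a b) := by
  intro x hx
  obtain ⟨p, hp⟩ := exists_support_convEnv hF hx
  rcases hx.1.eq_or_lt with rfl | hax
  · exact (convexOn_convEnv hF).differentiableWithinAt_Icc_left hab
      fun u hu => affine_le_convEnv hp hu
  rcases hx.2.eq_or_lt with rfl | hxb
  · exact (convexOn_convEnv hF).differentiableWithinAt_Icc_right hab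
      fun u hu => affine_le_convEnv hp hu
  exact (hasDerivAt_convEnv_of_support hF.continuousOn ⟨hax, hxb⟩ (hF' x ⟨hax, hxb⟩)
    hp).differentiableAt.differentiableWithinAt

theorem support_slope_le_of_deriv_le {x p q f' g' : ℝ} (hF : ContinuousOn F (Icc a b))
    (hG : ContinuousOn G (Icc a b)) (hGF : MonotoneOn (G - F) (Icc a b)) (hx : x ∈ Ioo a b)
    (hFx : HasDerivAt F f' x) (hGx : HasDerivAt G g' x) (hfg : f' ≤ g')
    (hp : ∀ u ∈ Icc a b, convEnv a b F x + p * (u - x) ≤ F u)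
    (hq : ∀ u ∈ Icc a b, convEnv a b G x + q * (u - x) ≤ G u) : p ≤ q := by
  have hxI := Ioo_subset_Icc_self hx
  obtain ⟨s, hs, -, -, hsx, -, hFs, -⟩ := exists_contact_of_support hF hxI hp
  obtain ⟨-, -, t, ht, -, hxt, -, hGt⟩ := exists_contact_of_support hG hxI hq
  rcases (hsx.trans hxt).lt_or_eq with hst | rfl
  · have hinc : G s - F s ≤ G t - F t := hGF hs ht (hsx.trans hxt)
    have hFt := hp t ht
    have hGs := hq s hs
    refine le_of_mul_le_mul_right ?_ (sub_pos.2 hst)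
    linear_combination hFt + hinc + hGs + hFs + hGt
  -- `x` is a contact point for both `F` and `G`, so both slopes are derivatives there
  obtain rfl : s = x := le_antisymm hsx hxt
  have hI : Icc a b ∈ 𝓝 s := Icc_mem_nhds hx.1 hx.2
  have hpf := (hasDerivAt_const_add_mul_sub _ p s).eq_of_eventuallyLE hFx
    (eventually_of_mem hI hp) (by simpa using hFs.symm)
  have hqg := (hasDerivAt_const_add_mul_sub _ q s).eq_of_eventuallyLE hGx
    (eventually_of_mem hI hq) (by simpa using hGt.symm)
  linarith

theorem derivWithin_convEnv_le {L : ℝ≥0} {f g : ℝ → ℝ} (hab : a < b)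
    (hF : LipschitzOnWith K F (Icc a b)) (hG : LipschitzOnWith L G (Icc a b))
    (hf : ∀ x ∈ Ioo a b, HasDerivAt F (f x) x) (hg : ∀ x ∈ Ioo a b, HasDerivAt G (g x) x)
    (hfg : ∀ x ∈ Ioo a b, f x ≤ g x) {x : ℝ} (hx : x ∈ Icc a b) :
    derivWithin (convEnv a b F) (Icc a b) x ≤ derivWithin (convEnv a b G) (Icc a b) x := by
  have hGF : MonotoneOn (G - F) (Icc a b) := by
    refine monotoneOn_of_hasDerivWithinAt_nonneg (f' := g - f) (convex_Icc a b)
      (hG.continuousOn.sub hF.continuousOn) (fun u hu => ?_) (fun u hu => ?_) <;>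
      rw [interior_Icc] at hu
    · exact ((hg u hu).sub (hf u hu)).hasDerivWithinAt
    · exact sub_nonneg.2 (hfg u hu)
  refine derivWithin_Icc_le_of_forall_mem_Ioo
    (differentiableOn_convEnv hab hF fun u hu => (hf u hu).differentiableAt)
    (differentiableOn_convEnv hab hG fun u hu => (hg u hu).differentiableAt) (fun u hu => ?_) hx
  have huI := Ioo_subset_Icc_self hu
  obtain ⟨p, hp⟩ := exists_support_convEnv hF huI
  obtain ⟨q, hq⟩ := exists_support_convEnv hG huI
  rw [(hasDerivAt_convEnv_of_support hF.continuousOn hu (hf u hu).differentiableAt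
      hp).hasDerivWithinAt.derivWithin (uniqueDiffOn_Icc hab u huI),
    (hasDerivAt_convEnv_of_support hG.continuousOn hu (hg u hu).differentiableAt
      hq).hasDerivWithinAt.derivWithin (uniqueDiffOn_Icc hab u huI)]
  exact support_slope_le_of_deriv_le hF.continuousOn hG.continuousOn hGF hu (hf u hu) (hg u hu)
    (hfg u hu) hp hq

end ConvexEnvelope

section Primitive

variable {a b : ℝ} {f : ℝ → ℝ}

theorem hasDerivWithinAt_primit (hf : ContinuousOn f (Icc a b)) {x : ℝ} (hx : x ∈ Icc a b) :
    HasDerivWithinAt (primit a f) (f x) (Icc a b) x := by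
  have : Fact (x ∈ Icc a b) := ⟨hx⟩
  exact intervalIntegral.integral_hasDerivWithinAt_right
    ((hf.mono (uIcc_subset_Icc ⟨le_rfl, hx.1.trans hx.2⟩ hx)).intervalIntegrable)
    (hf.stronglyMeasurableAtFilter_nhdsWithin measurableSet_Icc x) (hf x hx)

theorem exists_lipschitzOnWith_primit (hf : ContinuousOn f (Icc a b)) :
    ∃ K, LipschitzOnWith K (primit a f) (Icc a b) := by
  obtain ⟨C, hC⟩ := isCompact_Icc.bddAbove_image hf.nnnorm
  exact ⟨C, (convex_Icc a b).lipschitzOnWith_of_nnnorm_hasDerivWithin_le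
    (fun x hx => hasDerivWithinAt_primit hf hx) fun x hx => hC (mem_image_of_mem _ hx)⟩

theorem hasDerivAt_primit (hf : ContinuousOn f (Icc a b)) {x : ℝ} (hx : x ∈ Ioo a b) :
    HasDerivAt (primit a f) (f x) x :=
  (hasDerivWithinAt_primit hf (Ioo_subset_Icc_self hx)).hasDerivAt (Icc_mem_nhds hx.1 hx.2)

end Primitive

/-- Monotonicity of `T`: if `f ≤ g` on `[a,b]`, then `Tf ≤ Tg` on `[a,b]`. -/
theorem Tcv_monotone (a b : ℝ) (hab : a < b) (f g : ℝ → ℝ)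
    (hf : ContinuousOn f (Set.Icc a b)) (hg : ContinuousOn g (Set.Icc a b))
    (hle : ∀ x ∈ Set.Icc a b, f x ≤ g x) :
    ∀ x ∈ Set.Icc a b, Tcv a b f x ≤ Tcv a b g x := by
  obtain ⟨K, hK⟩ := exists_lipschitzOnWith_primit hf
  obtain ⟨L, hL⟩ := exists_lipschitzOnWith_primit hg
  exact fun x hx => derivWithin_convEnv_le hab hK hL (fun u hu => hasDerivAt_primit hf hu)
    (fun u hu => hasDerivAt_primit hg hu) (fun u hu => hle u (Ioo_subset_Icc_self hu)) hx
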